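/- arXiv:2301.02957 — 4 statements merged into one kernel-verified Lean document; each statement's English description precedes it below -/
import Mathlib

section
/- The functions u(x,y,t) = -(η_x/(f̄ F²)) sin(f̄ t) - (η_y/(f̄ F²))(1 - cos(f̄ t)), v(x,y,t) = (η_x/(f̄ F²))(1 - cos(f̄ t)) - (η_y/(f̄ F²)) sin(f̄ t), and h(x,y,t) = (η_x²/(f̄² F²))(1 - cos(f̄ t)) + η_x x + (η_y²/(f̄² F²))(1 - cos(f̄ t)) + η_y y satisfy the rotating shallow water equations with flat bottom (D = 0): ∂u/∂t = -u ∂u/∂x - v ∂u/∂y - (1/F²) ∂h/∂x + f̄ v, ∂v/∂t = -u ∂v/∂x - v ∂v/∂y - (1/F²) ∂h/∂y - f̄ u, ∂h/∂t = -∂(u h)/∂x - ∂(v h)/∂y, together with the initial conditions u(x,y,0) = v(x,y,0) = 0 and h(x,y,0) = η_x x + η_y y. -/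
/-!
The velocity of the solution does not depend on position and the free surface is a tilted plane
whose tilt `(ηx, ηy)` never changes, so the advection terms vanish, the pressure gradient is the
constant `(ηx, ηy) / F²`, and the shallow water equations collapse to the linear ODEs
`U' = f V - ηx / F²`, `V' = -f U - ηy / F²`, `H' = -(ηx U + ηy V)`. These are solved by an
inertial oscillation of frequency `f` about the geostrophic velocity `(-ηy, ηx) / (f F²)`.
-/

open Real

def IsRotatingShallowWaterSolution (f F : ℝ) (u v h : ℝ → ℝ → ℝ → ℝ) : Prop :=
  (∀ x y t, deriv (fun s => u x y s) t =
    -(u x y t) * deriv (fun a => u a y t) x - v x y t * deriv (fun b => u x b t) y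
      - (1 / F ^ 2) * deriv (fun a => h a y t) x + f * v x y t) ∧
  (∀ x y t, deriv (fun s => v x y s) t =
    -(u x y t) * deriv (fun a => v a y t) x - v x y t * deriv (fun b => v x b t) y
      - (1 / F ^ 2) * deriv (fun b => h x b t) y - f * u x y t) ∧
  (∀ x y t, deriv (fun s => h x y s) t =
    -(deriv (fun a => u a y t * h a y t) x) - deriv (fun b => v x b t * h x b t) y)

theorem isRotatingShallowWaterSolution_of_uniform_flow {f F p q : ℝ} {U V H : ℝ → ℝ}
    {u v h : ℝ → ℝ → ℝ → ℝ} (hu : ∀ x y t, u x y t = U t) (hv : ∀ x y t, v x y t = V t)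
    (hh : ∀ x y t, h x y t = H t + p * x + q * y)
    (hU : ∀ t, HasDerivAt U (f * V t - p / F ^ 2) t)
    (hV : ∀ t, HasDerivAt V (-(f * U t) - q / F ^ 2) t)
    (hH : ∀ t, HasDerivAt H (-(p * U t + q * V t)) t) :
    IsRotatingShallowWaterSolution f F u v h := by
  simp only [IsRotatingShallowWaterSolution, hu, hv, hh, deriv_const, deriv_add_const',
    deriv_const_add', deriv_const_mul_id', deriv_const_mul_field']
  refine ⟨fun x y t => ?_, fun x y t => ?_, fun x y t => ?_⟩
  · rw [(hU t).deriv]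
    ring
  · rw [(hV t).deriv]
    ring
  · rw [(hH t).deriv]
    ring

theorem hasDerivAt_sinusoid (c a b ω t : ℝ) :
    HasDerivAt (fun s => c + a * sin (ω * s) + b * cos (ω * s))
      (ω * (a * cos (ω * t) - b * sin (ω * t))) t := by
  have hω : HasDerivAt (fun s => ω * s) ω t := by simpa using (hasDerivAt_id t).const_mul ω
  exact (((hω.sin.const_mul a).const_add c).add (hω.cos.const_mul b)).congr_deriv (by ring)

theorem stmt_0_general (fbar F ηx ηy : ℝ) (hf : fbar ≠ 0)
    (u v h : ℝ → ℝ → ℝ → ℝ)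
    (hu : ∀ x y t, u x y t =
      -(ηx / (fbar * F ^ 2)) * Real.sin (fbar * t)
        - (ηy / (fbar * F ^ 2)) * (1 - Real.cos (fbar * t)))
    (hv : ∀ x y t, v x y t =
      (ηx / (fbar * F ^ 2)) * (1 - Real.cos (fbar * t))
        - (ηy / (fbar * F ^ 2)) * Real.sin (fbar * t))
    (hh : ∀ x y t, h x y t =
      (ηx ^ 2 / (fbar ^ 2 * F ^ 2)) * (1 - Real.cos (fbar * t)) + ηx * x
        + (ηy ^ 2 / (fbar ^ 2 * F ^ 2)) * (1 - Real.cos (fbar * t)) + ηy * y) :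
    (∀ x y t, deriv (fun s => u x y s) t =
      -(u x y t) * deriv (fun a => u a y t) x - v x y t * deriv (fun b => u x b t) y
        - (1 / F ^ 2) * deriv (fun a => h a y t) x + fbar * v x y t) ∧
    (∀ x y t, deriv (fun s => v x y s) t =
      -(u x y t) * deriv (fun a => v a y t) x - v x y t * deriv (fun b => v x b t) y
        - (1 / F ^ 2) * deriv (fun b => h x b t) y - fbar * u x y t) ∧
    (∀ x y t, deriv (fun s => h x y s) t =
      -(deriv (fun a => u a y t * h a y t) x) - deriv (fun b => v x b t * h x b t) y) ∧
    (∀ x y, u x y 0 = 0 ∧ v x y 0 = 0 ∧ h x y 0 = ηx * x + ηy * y) := by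
  set α := ηx / (fbar * F ^ 2)
  set β := ηy / (fbar * F ^ 2)
  set γ := ηx ^ 2 / (fbar ^ 2 * F ^ 2) + ηy ^ 2 / (fbar ^ 2 * F ^ 2)
  have hsol : IsRotatingShallowWaterSolution fbar F u v h := by
    refine isRotatingShallowWaterSolution_of_uniform_flow (p := ηx) (q := ηy)
      (U := fun s => -β + -α * sin (fbar * s) + β * cos (fbar * s))
      (V := fun s => α + -β * sin (fbar * s) + -α * cos (fbar * s))
      (H := fun s => γ + 0 * sin (fbar * s) + -γ * cos (fbar * s))
      (fun x y t => by rw [hu]; ring) (fun x y t => by rw [hv]; ring)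
      (fun x y t => by rw [hh]; ring) (fun t => ?_) (fun t => ?_) (fun t => ?_)
    · exact (hasDerivAt_sinusoid _ _ _ _ t).congr_deriv (by simp only [α, β]; field_simp; ring)
    · exact (hasDerivAt_sinusoid _ _ _ _ t).congr_deriv (by simp only [α, β]; field_simp; ring)
    · exact (hasDerivAt_sinusoid _ _ _ _ t).congr_deriv (by simp only [α, β, γ]; field_simp; ring)
  exact ⟨hsol.1, hsol.2.1, hsol.2.2, fun x y => by simp [hu, hv, hh]⟩

/-- Inertial oscillation solution (Theorem 3.3): the explicit functions satisfy the
rotating shallow water equations with flat bottom and the stated initial conditions. -/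
theorem stmt_0 (fbar F ηx ηy : ℝ) (hf : fbar ≠ 0) (hF : F ≠ 0)
    (u v h : ℝ → ℝ → ℝ → ℝ)
    (hu : ∀ x y t, u x y t =
      -(ηx / (fbar * F ^ 2)) * Real.sin (fbar * t)
        - (ηy / (fbar * F ^ 2)) * (1 - Real.cos (fbar * t)))
    (hv : ∀ x y t, v x y t =
      (ηx / (fbar * F ^ 2)) * (1 - Real.cos (fbar * t))
        - (ηy / (fbar * F ^ 2)) * Real.sin (fbar * t))
    (hh : ∀ x y t, h x y t =
      (ηx ^ 2 / (fbar ^ 2 * F ^ 2)) * (1 - Real.cos (fbar * t)) + ηx * x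
        + (ηy ^ 2 / (fbar ^ 2 * F ^ 2)) * (1 - Real.cos (fbar * t)) + ηy * y) :
    (∀ x y t, deriv (fun s => u x y s) t =
      -(u x y t) * deriv (fun a => u a y t) x - v x y t * deriv (fun b => u x b t) y
        - (1 / F ^ 2) * deriv (fun a => h a y t) x + fbar * v x y t) ∧
    (∀ x y t, deriv (fun s => v x y s) t =
      -(u x y t) * deriv (fun a => v a y t) x - v x y t * deriv (fun b => v x b t) y
        - (1 / F ^ 2) * deriv (fun b => h x b t) y - fbar * u x y t) ∧
    (∀ x y t, deriv (fun s => h x y s) t =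
      -(deriv (fun a => u a y t * h a y t) x) - deriv (fun b => v x b t * h x b t) y) ∧
    (∀ x y, u x y 0 = 0 ∧ v x y 0 = 0 ∧ h x y 0 = ηx * x + ηy * y) :=
  stmt_0_general fbar F ηx ηy hf u v h hu hv hh
end

section
/- For t ∈ [0, π/(2f̄)), the functions u(x,y,t) = f̄ y, v(x,y,t) = -f̄ y tan(f̄ t), h(x,y,t) = h₀ sec(f̄ t) satisfy the rotating shallow water equations over a flat bottom with constant Coriolis parameter f̄ > 0, together with the initial conditions u(x,y,0) = f̄ y, v(x,y,0) = 0, h(x,y,0) = h₀. -/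
/-!
The velocity is linear in `y` and independent of `x`, and the height is spatially constant, so
every spatial derivative is explicit. The momentum equation for `v` then reduces to
`tan' = 1 + tan ^ 2` and the continuity equation to `sec' = tan * sec`; both need
`cos (fbar * t) ≠ 0`, which holds because `fbar * t ∈ [0, π / 2)`.
-/

open Real

theorem cos_mul_pos_of_mem_Ico {c t : ℝ} (hc : 0 < c) (ht : t ∈ Set.Ico 0 (π / (2 * c))) :
    0 < cos (c * t) := by
  apply cos_pos_of_mem_Ioo
  have hupper : c * t < π / 2 :=
    calc c * t < c * (π / (2 * c)) := mul_lt_mul_of_pos_left ht.2 hc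
      _ = π / 2 := by field_simp
  constructor <;> nlinarith [pi_pos, ht.1]

theorem HasDerivAt.tan {f : ℝ → ℝ} {f' t : ℝ} (hf : HasDerivAt f f' t)
    (hc : Real.cos (f t) ≠ 0) :
    HasDerivAt (fun s => Real.tan (f s)) (f' * (1 + Real.tan (f t) ^ 2)) t := by
  refine ((hasDerivAt_tan hc).comp t hf).congr_deriv ?_
  rw [← inv_one_add_tan_sq hc, one_div, inv_inv]
  ring

theorem HasDerivAt.sec {f : ℝ → ℝ} {f' t : ℝ} (hf : HasDerivAt f f' t)
    (hc : Real.cos (f t) ≠ 0) :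
    HasDerivAt (fun s => 1 / Real.cos (f s)) (f' * Real.tan (f t) * (1 / Real.cos (f t))) t := by
  simp only [one_div]
  refine (hf.cos.inv hc).congr_deriv ?_
  rw [tan_eq_sin_div_cos]
  field_simp

theorem stmt_2_general (fbar F h₀ : ℝ) (hf : 0 < fbar)
    (u v h : ℝ → ℝ → ℝ → ℝ)
    (hu : ∀ x y t, u x y t = fbar * y)
    (hv : ∀ x y t, v x y t = -(fbar * y) * Real.tan (fbar * t))
    (hh : ∀ x y t, h x y t = h₀ * (1 / Real.cos (fbar * t))) :
    (∀ x y, ∀ t ∈ Set.Ico (0 : ℝ) (Real.pi / (2 * fbar)),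
      deriv (fun s => u x y s) t =
        -(u x y t) * deriv (fun a => u a y t) x - v x y t * deriv (fun b => u x b t) y
          - (1 / F ^ 2) * deriv (fun a => h a y t) x + fbar * v x y t) ∧
    (∀ x y, ∀ t ∈ Set.Ico (0 : ℝ) (Real.pi / (2 * fbar)),
      deriv (fun s => v x y s) t =
        -(u x y t) * deriv (fun a => v a y t) x - v x y t * deriv (fun b => v x b t) y
          - (1 / F ^ 2) * deriv (fun b => h x b t) y - fbar * u x y t) ∧
    (∀ x y, ∀ t ∈ Set.Ico (0 : ℝ) (Real.pi / (2 * fbar)),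
      deriv (fun s => h x y s) t =
        -(deriv (fun a => u a y t * h a y t) x) - deriv (fun b => v x b t * h x b t) y) ∧
    (∀ x y, u x y 0 = fbar * y ∧ v x y 0 = 0 ∧ h x y 0 = h₀) := by
  have hcos {t : ℝ} (ht : t ∈ Set.Ico 0 (π / (2 * fbar))) : cos (fbar * t) ≠ 0 :=
    (cos_mul_pos_of_mem_Ico hf ht).ne'
  have hphase (t : ℝ) : HasDerivAt (fun s => fbar * s) fbar t := hasDerivAt_const_mul fbar
  refine ⟨fun x y t _ => ?_, fun x y t ht => ?_, fun x y t ht => ?_,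
    fun x y => by simp [hu, hv, hh]⟩
  · simp only [hu, hv, hh, deriv_const, deriv_const_mul_id']
    ring
  · simp only [hu, hv, hh, deriv_const, deriv.fun_neg', deriv_mul_const_field',
      deriv_const_mul_id', (((hphase t).tan (hcos ht)).const_mul _).deriv]
    ring
  · simp only [hu, hv, hh, deriv_const, deriv.fun_neg', deriv_mul_const_field',
      deriv_const_mul_id', (((hphase t).sec (hcos ht)).const_mul _).deriv]
    ring

/-- Theorem 3.9(i): anticyclonic vortex with finite escape time, Condition IV. -/
theorem stmt_2 (fbar F h₀ : ℝ) (hf : 0 < fbar) (hF : F ≠ 0)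
    (u v h : ℝ → ℝ → ℝ → ℝ)
    (hu : ∀ x y t, u x y t = fbar * y)
    (hv : ∀ x y t, v x y t = -(fbar * y) * Real.tan (fbar * t))
    (hh : ∀ x y t, h x y t = h₀ * (1 / Real.cos (fbar * t))) :
    (∀ x y, ∀ t ∈ Set.Ico (0 : ℝ) (Real.pi / (2 * fbar)),
      deriv (fun s => u x y s) t =
        -(u x y t) * deriv (fun a => u a y t) x - v x y t * deriv (fun b => u x b t) y
          - (1 / F ^ 2) * deriv (fun a => h a y t) x + fbar * v x y t) ∧
    (∀ x y, ∀ t ∈ Set.Ico (0 : ℝ) (Real.pi / (2 * fbar)),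
      deriv (fun s => v x y s) t =
        -(u x y t) * deriv (fun a => v a y t) x - v x y t * deriv (fun b => v x b t) y
          - (1 / F ^ 2) * deriv (fun b => h x b t) y - fbar * u x y t) ∧
    (∀ x y, ∀ t ∈ Set.Ico (0 : ℝ) (Real.pi / (2 * fbar)),
      deriv (fun s => h x y s) t =
        -(deriv (fun a => u a y t * h a y t) x) - deriv (fun b => v x b t * h x b t) y) ∧
    (∀ x y, u x y 0 = fbar * y ∧ v x y 0 = 0 ∧ h x y 0 = h₀) :=
  stmt_2_general fbar F h₀ hf u v h hu hv hh
end

section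
/- For t ∈ [0, π/(2f̄)), the functions u(x,y,t) = f̄ x sec(f̄ t) - f̄ x tan(f̄ t) + y·d/dt[tan(f̄ t) - sec(f̄ t)], v(x,y,t) = -f̄ x, h(x,y,t) = (h₀/f̄)·d/dt[tan(f̄ t) - sec(f̄ t)] satisfy the rotating shallow water equations over a flat bottom, with initial conditions u(x,y,0) = f̄ x + f̄ y, v(x,y,0) = -f̄ x, h(x,y,0) = h₀. -/
/-!
Write `g = tan (f̄ t) - sec (f̄ t)`, so that `u = -f̄ x g + y g'`, `v = -f̄ x`, `h = (h₀ / f̄) g'`.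
Since `g = (sin - 1) / cos` at `f̄ t`, we get `g' = f̄ (1 - sin) / cos²` and
`1 + g² = 2 (1 - sin) / cos²`, i.e. the Riccati equation `2 g' = f̄ (1 + g²)`, whence `g'' = f̄ g g'`.
For this ansatz the `x`-terms of the `u`-equation cancel exactly by the Riccati equation, while
its `y`-terms and the `h`-equation are both `g'' = f̄ g g'`; the `v`-equation holds identically.
On `[0, π / (2 f̄))` we have `cos (f̄ t) > 0`, so `g` is smooth there.
-/

open Real

def SolvesShallowWater (f F : ℝ) (T : Set ℝ) (u v h : ℝ → ℝ → ℝ → ℝ) : Prop :=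
  (∀ x y, ∀ t ∈ T,
      deriv (fun s => u x y s) t =
        -(u x y t) * deriv (fun a => u a y t) x - v x y t * deriv (fun b => u x b t) y
          - (1 / F ^ 2) * deriv (fun a => h a y t) x + f * v x y t) ∧
    (∀ x y, ∀ t ∈ T,
      deriv (fun s => v x y s) t =
        -(u x y t) * deriv (fun a => v a y t) x - v x y t * deriv (fun b => v x b t) y
          - (1 / F ^ 2) * deriv (fun b => h x b t) y - f * u x y t) ∧
    (∀ x y, ∀ t ∈ T,
      deriv (fun s => h x y s) t =
        -(deriv (fun a => u a y t * h a y t) x) - deriv (fun b => v x b t * h x b t) y)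

theorem solvesShallowWater_of_riccati {f F h₀ : ℝ} {T : Set ℝ} {g g' : ℝ → ℝ}
    (hg : ∀ t ∈ T, HasDerivAt g (g' t) t) (hg' : ∀ t ∈ T, HasDerivAt g' (f * g t * g' t) t)
    (hric : ∀ t ∈ T, 2 * g' t = f * (1 + g t ^ 2)) :
    SolvesShallowWater f F T (fun x y t => -(f * x) * g t + y * g' t) (fun x _ _ => -(f * x))
      (fun _ _ t => h₀ / f * g' t) := by
  refine ⟨fun x y t ht => ?_, fun x y t _ => ?_, fun x y t ht => ?_⟩ <;> beta_reduce
  · have hu : HasDerivAt (fun s => -(f * x) * g s + y * g' s)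
        (-(f * x) * g' t + y * (f * g t * g' t)) t :=
      ((hg t ht).const_mul _).add ((hg' t ht).const_mul _)
    have hux : deriv (fun a => -(f * a) * g t + y * g' t) x = -(f * g t) := by simp
    have huy : deriv (fun b => -(f * x) * g t + b * g' t) y = g' t := by simp
    rw [hu.deriv, hux, huy, deriv_const]
    linear_combination (-(f * x)) * hric t ht
  · have hvx : deriv (fun a => -(f * a)) x = -f := by simp
    rw [hvx, deriv_const, deriv_const, deriv_const]
    ring
  · have huhx : deriv (fun a => (-(f * a) * g t + y * g' t) * (h₀ / f * g' t)) x =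
        -(f * g t) * (h₀ / f * g' t) := by simp
    rw [((hg' t ht).const_mul (h₀ / f)).deriv, huhx, deriv_const]
    ring

noncomputable def tanSubSec (f t : ℝ) : ℝ := tan (f * t) - 1 / cos (f * t)

noncomputable def tanSubSecDeriv (f t : ℝ) : ℝ :=
  f * (1 / cos (f * t)) ^ 2 - f * (1 / cos (f * t)) * tan (f * t)

section

variable {f t : ℝ}

theorem cos_mul_ne_zero_of_mem_Ico (hf : 0 < f) (ht : t ∈ Set.Ico 0 (π / (2 * f))) :
    cos (f * t) ≠ 0 := by
  have hlt : f * t < π / 2 := by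
    have := (lt_div_iff₀ (by positivity : (0 : ℝ) < 2 * f)).mp ht.2
    linarith
  have hgt : -(π / 2) < f * t := by nlinarith [ht.1, pi_pos]
  exact (cos_pos_of_mem_Ioo ⟨hgt, hlt⟩).ne'

theorem hasDerivAt_one_div_cos_mul (hc : cos (f * t) ≠ 0) :
    HasDerivAt (fun s => 1 / cos (f * s)) (f * sin (f * t) / cos (f * t) ^ 2) t := by
  have h := ((hasDerivAt_cos (f * t)).comp t ((hasDerivAt_id t).const_mul f)).inv hc
  simp only [one_div]
  refine h.congr_deriv ?_
  simp only [Function.comp_apply, mul_one]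
  ring

theorem hasDerivAt_tan_mul (hc : cos (f * t) ≠ 0) :
    HasDerivAt (fun s => tan (f * s)) (f / cos (f * t) ^ 2) t := by
  refine ((hasDerivAt_tan hc).comp t ((hasDerivAt_id t).const_mul f)).congr_deriv ?_
  simp only [mul_one]
  ring

theorem hasDerivAt_tanSubSec (hc : cos (f * t) ≠ 0) :
    HasDerivAt (tanSubSec f) (tanSubSecDeriv f t) t := by
  refine ((hasDerivAt_tan_mul hc).sub (hasDerivAt_one_div_cos_mul hc)).congr_deriv ?_
  rw [tanSubSecDeriv, tan_eq_sin_div_cos]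
  field_simp

theorem hasDerivAt_tanSubSecDeriv (hc : cos (f * t) ≠ 0) :
    HasDerivAt (tanSubSecDeriv f) (f * tanSubSec f t * tanSubSecDeriv f t) t := by
  have hsec := hasDerivAt_one_div_cos_mul hc
  refine (((hsec.pow 2).const_mul f).sub
    ((hsec.const_mul f).mul (hasDerivAt_tan_mul hc))).congr_deriv ?_
  rw [tanSubSec, tanSubSecDeriv, tan_eq_sin_div_cos]
  norm_num only [Nat.cast_ofNat]
  field_simp
  ring

theorem two_mul_tanSubSecDeriv (hc : cos (f * t) ≠ 0) :
    2 * tanSubSecDeriv f t = f * (1 + tanSubSec f t ^ 2) := by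
  rw [tanSubSec, tanSubSecDeriv, tan_eq_sin_div_cos]
  field_simp
  linear_combination (-f) * sin_sq_add_cos_sq (f * t)

end

theorem stmt_5_general (fbar F h₀ : ℝ) (hf : 0 < fbar)
    (u v h : ℝ → ℝ → ℝ → ℝ)
    (hu : ∀ x y t, u x y t =
      fbar * x * (1 / Real.cos (fbar * t)) - fbar * x * Real.tan (fbar * t)
        + y * (fbar * (1 / Real.cos (fbar * t)) ^ 2
                - fbar * (1 / Real.cos (fbar * t)) * Real.tan (fbar * t)))
    (hv : ∀ x y t, v x y t = -(fbar * x))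
    (hh : ∀ x y t, h x y t =
      (h₀ / fbar) * (fbar * (1 / Real.cos (fbar * t)) ^ 2
        - fbar * (1 / Real.cos (fbar * t)) * Real.tan (fbar * t))) :
    (∀ x y, ∀ t ∈ Set.Ico (0 : ℝ) (Real.pi / (2 * fbar)),
      deriv (fun s => u x y s) t =
        -(u x y t) * deriv (fun a => u a y t) x - v x y t * deriv (fun b => u x b t) y
          - (1 / F ^ 2) * deriv (fun a => h a y t) x + fbar * v x y t) ∧
    (∀ x y, ∀ t ∈ Set.Ico (0 : ℝ) (Real.pi / (2 * fbar)),
      deriv (fun s => v x y s) t =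
        -(u x y t) * deriv (fun a => v a y t) x - v x y t * deriv (fun b => v x b t) y
          - (1 / F ^ 2) * deriv (fun b => h x b t) y - fbar * u x y t) ∧
    (∀ x y, ∀ t ∈ Set.Ico (0 : ℝ) (Real.pi / (2 * fbar)),
      deriv (fun s => h x y s) t =
        -(deriv (fun a => u a y t * h a y t) x) - deriv (fun b => v x b t * h x b t) y) ∧
    (∀ x y, u x y 0 = fbar * x + fbar * y ∧ v x y 0 = -(fbar * x) ∧ h x y 0 = h₀) := by
  have hu' : u = fun x y t => -(fbar * x) * tanSubSec fbar t + y * tanSubSecDeriv fbar t := by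
    funext x y t
    rw [hu, tanSubSec, tanSubSecDeriv]
    ring
  have hv' : v = fun x _ _ => -(fbar * x) := funext₃ hv
  have hh' : h = fun _ _ t => h₀ / fbar * tanSubSecDeriv fbar t := funext₃ hh
  subst hu' hv' hh'
  have hcos : ∀ t ∈ Set.Ico 0 (π / (2 * fbar)), cos (fbar * t) ≠ 0 :=
    fun _ => cos_mul_ne_zero_of_mem_Ico hf
  obtain ⟨hmomentum_x, hmomentum_y, hmass⟩ := solvesShallowWater_of_riccati (F := F) (h₀ := h₀)
    (fun t ht => hasDerivAt_tanSubSec (hcos t ht))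
    (fun t ht => hasDerivAt_tanSubSecDeriv (hcos t ht))
    (fun t ht => two_mul_tanSubSecDeriv (hcos t ht))
  refine ⟨hmomentum_x, hmomentum_y, hmass, fun x y => ⟨?_, rfl, ?_⟩⟩ <;>
    simp only [tanSubSec, tanSubSecDeriv, mul_zero, cos_zero, tan_zero, sub_zero]
  · ring
  · field_simp

/-- Theorem 3.10(ii): anticyclonic vortex with finite escape time, Condition VII.
Here sec θ = 1 / cos θ, d/dt tan(f̄ t) = f̄ sec²(f̄ t) and d/dt sec(f̄ t) = f̄ sec(f̄ t) tan(f̄ t). -/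
theorem stmt_5 (fbar F h₀ : ℝ) (hf : 0 < fbar) (hF : F ≠ 0)
    (u v h : ℝ → ℝ → ℝ → ℝ)
    (hu : ∀ x y t, u x y t =
      fbar * x * (1 / Real.cos (fbar * t)) - fbar * x * Real.tan (fbar * t)
        + y * (fbar * (1 / Real.cos (fbar * t)) ^ 2
                - fbar * (1 / Real.cos (fbar * t)) * Real.tan (fbar * t)))
    (hv : ∀ x y t, v x y t = -(fbar * x))
    (hh : ∀ x y t, h x y t =
      (h₀ / fbar) * (fbar * (1 / Real.cos (fbar * t)) ^ 2
        - fbar * (1 / Real.cos (fbar * t)) * Real.tan (fbar * t))) :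
    (∀ x y, ∀ t ∈ Set.Ico (0 : ℝ) (Real.pi / (2 * fbar)),
      deriv (fun s => u x y s) t =
        -(u x y t) * deriv (fun a => u a y t) x - v x y t * deriv (fun b => u x b t) y
          - (1 / F ^ 2) * deriv (fun a => h a y t) x + fbar * v x y t) ∧
    (∀ x y, ∀ t ∈ Set.Ico (0 : ℝ) (Real.pi / (2 * fbar)),
      deriv (fun s => v x y s) t =
        -(u x y t) * deriv (fun a => v a y t) x - v x y t * deriv (fun b => v x b t) y
          - (1 / F ^ 2) * deriv (fun b => h x b t) y - fbar * u x y t) ∧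
    (∀ x y, ∀ t ∈ Set.Ico (0 : ℝ) (Real.pi / (2 * fbar)),
      deriv (fun s => h x y s) t =
        -(deriv (fun a => u a y t * h a y t) x) - deriv (fun b => v x b t * h x b t) y) ∧
    (∀ x y, u x y 0 = fbar * x + fbar * y ∧ v x y 0 = -(fbar * x) ∧ h x y 0 = h₀) :=
  stmt_5_general fbar F h₀ hf u v h hu hv hh
end

section
/- If time-dependent coefficients ṽ₀, ṽ_x, ṽ_y, h̃₀ : ℝ → ℝ satisfy the ODE system dṽ₀/dt = -ṽ₀ ṽ_y, dṽ_x/dt = -ṽ_x ṽ_y, dṽ_y/dt = -f̄ ṽ_x - ṽ_y² - f̄², dh̃₀/dt = -h̃₀ ṽ_y, then u(x,y,t) = f̄ y, v(x,y,t) = ṽ₀(t) + ṽ_x(t) x + ṽ_y(t) y, h(x,y,t) = h̃₀(t) satisfy the rotating shallow water equations over a flat bottom (D = 0). -/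
/-!
All three fields are affine in `(x, y)`, so every spatial derivative is a function of `t` alone and
each equation becomes a polynomial identity in `x` and `y`. In the `u`-equation the advection term
`-v ∂u/∂y = -f̄ v` cancels the Coriolis term `f̄ v`. In the `v`-equation the coefficients of `1`, `x`
and `y` are exactly the ODEs for `ṽ₀`, `ṽ_x` and `ṽ_y`. In the continuity equation the divergence of
`(u, v)` is `ṽ_y`, which gives the ODE for `h̃₀`.
-/

theorem deriv_add_mul_add_mul {a b c : ℝ → ℝ} {t : ℝ} (ha : DifferentiableAt ℝ a t)
    (hb : DifferentiableAt ℝ b t) (hc : DifferentiableAt ℝ c t) (x y : ℝ) :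
    deriv (fun s => a s + b s * x + c s * y) t = deriv a t + deriv b t * x + deriv c t * y :=
  ((ha.hasDerivAt.add (hb.hasDerivAt.mul_const x)).add (hc.hasDerivAt.mul_const y)).deriv

theorem stmt_7_general (fbar F : ℝ)
    (v₀ vx vy h₀ : ℝ → ℝ)
    (hv₀ : Differentiable ℝ v₀) (hvx : Differentiable ℝ vx)
    (hvy : Differentiable ℝ vy)
    (ode1 : ∀ t, deriv v₀ t = -(v₀ t) * vy t)
    (ode2 : ∀ t, deriv vx t = -(vx t) * vy t)
    (ode3 : ∀ t, deriv vy t = -fbar * vx t - (vy t) ^ 2 - fbar ^ 2)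
    (ode4 : ∀ t, deriv h₀ t = -(h₀ t) * vy t)
    (u v h : ℝ → ℝ → ℝ → ℝ)
    (hu : ∀ x y t, u x y t = fbar * y)
    (hv : ∀ x y t, v x y t = v₀ t + vx t * x + vy t * y)
    (hh : ∀ x y t, h x y t = h₀ t) :
    (∀ x y t, deriv (fun s => u x y s) t =
      -(u x y t) * deriv (fun a => u a y t) x - v x y t * deriv (fun b => u x b t) y
        - (1 / F ^ 2) * deriv (fun a => h a y t) x + fbar * v x y t) ∧
    (∀ x y t, deriv (fun s => v x y s) t =
      -(u x y t) * deriv (fun a => v a y t) x - v x y t * deriv (fun b => v x b t) y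
        - (1 / F ^ 2) * deriv (fun b => h x b t) y - fbar * u x y t) ∧
    (∀ x y t, deriv (fun s => h x y s) t =
      -(deriv (fun a => u a y t * h a y t) x) - deriv (fun b => v x b t * h x b t) y) := by
  refine ⟨fun x y t => ?_, fun x y t => ?_, fun x y t => ?_⟩ <;>
    simp only [hu, hv, hh, deriv_const', deriv_const_mul_id', deriv_const_add', deriv_add_const',
      deriv_mul_const_field']
  · ring
  · rw [deriv_add_mul_add_mul (hv₀ t) (hvx t) (hvy t), ode1, ode2, ode3]
    ring
  · rw [ode4]
    ring

/-- Theorem 3.7 (reduced system for Conditions IV/V): solutions of the reduced ODE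
system give solutions of the rotating shallow water equations over a flat bottom. -/
theorem stmt_7 (fbar F : ℝ) (hF : F ≠ 0)
    (v₀ vx vy h₀ : ℝ → ℝ)
    (hv₀ : Differentiable ℝ v₀) (hvx : Differentiable ℝ vx)
    (hvy : Differentiable ℝ vy) (hh₀ : Differentiable ℝ h₀)
    (ode1 : ∀ t, deriv v₀ t = -(v₀ t) * vy t)
    (ode2 : ∀ t, deriv vx t = -(vx t) * vy t)
    (ode3 : ∀ t, deriv vy t = -fbar * vx t - (vy t) ^ 2 - fbar ^ 2)
    (ode4 : ∀ t, deriv h₀ t = -(h₀ t) * vy t)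
    (u v h : ℝ → ℝ → ℝ → ℝ)
    (hu : ∀ x y t, u x y t = fbar * y)
    (hv : ∀ x y t, v x y t = v₀ t + vx t * x + vy t * y)
    (hh : ∀ x y t, h x y t = h₀ t) :
    (∀ x y t, deriv (fun s => u x y s) t =
      -(u x y t) * deriv (fun a => u a y t) x - v x y t * deriv (fun b => u x b t) y
        - (1 / F ^ 2) * deriv (fun a => h a y t) x + fbar * v x y t) ∧
    (∀ x y t, deriv (fun s => v x y s) t =
      -(u x y t) * deriv (fun a => v a y t) x - v x y t * deriv (fun b => v x b t) y
        - (1 / F ^ 2) * deriv (fun b => h x b t) y - fbar * u x y t) ∧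
    (∀ x y t, deriv (fun s => h x y s) t =
      -(deriv (fun a => u a y t * h a y t) x) - deriv (fun b => v x b t * h x b t) y) :=
  stmt_7_general fbar F v₀ vx vy h₀ hv₀ hvx hvy ode1 ode2 ode3 ode4 u v h hu hv hh
end
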